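/- arXiv:2306.00376 — 7 statements merged into one kernel-verified Lean document; each statement's English description precedes it below -/
import Mathlib

section
/- Let f: ℝ → ℝ be continuously differentiable and let u₀, c₀ ∈ ℝ. Suppose that for every n ∈ ℕ there exist cₙ, λₙ ∈ ℝ and a nonconstant, periodic, twice continuously differentiable function uₙ: ℝ → ℝ satisfying uₙ''(x) + f(uₙ(x)) − cₙ·uₙ(x) − λₙ = 0 for all x ∈ ℝ, and that sup_{x∈ℝ} |uₙ(x) − u₀| → 0 and cₙ → c₀ as n → ∞. Then f'(u₀) − c₀ ≥ 0. -/
/-!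
Take a nonconstant periodic profile `u` with speed `c`, and put `g v = f v - c v - λ`, so that
`u'' = -g(u)`. At a maximum point of `u` we have `u'' ≤ 0`, hence `g ≥ 0` at the maximum value; at a
minimum point `g ≤ 0` at the minimum value. By the mean value theorem `g' = f' - c` is nonnegative
somewhere between the two values, i.e. at some value `u(x)` of the profile. Along the family these
values converge to `u₀`, and passing to the limit gives `f'(u₀) - c₀ ≥ 0`.
-/

open Filter Set Topology

section SecondDerivative

variable {f : ℝ → ℝ} {a : ℝ}

/- If `f'' a > 0`, the second derivative test makes `a` also a local minimum, so `f` is locally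
constant at `a`, forcing `f'' a = 0`. -/
theorem IsLocalMax.deriv_deriv_nonpos (h : IsLocalMax f a) (hc : ContinuousAt f a) :
    deriv (deriv f) a ≤ 0 := by
  by_contra! hpos
  have hmin : IsLocalMin f a := isLocalMin_of_deriv_deriv_pos hpos h.deriv_eq_zero hc
  have hconst : f =ᶠ[𝓝 a] fun _ ↦ f a :=
    (hmin.and h).mono fun _ hx ↦ le_antisymm hx.2 hx.1
  have hderiv : deriv f =ᶠ[𝓝 a] fun _ ↦ 0 :=
    hconst.eventuallyEq_nhds.mono fun _ hx ↦ hx.deriv_eq.trans (deriv_const _ _)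
  simp [hderiv.deriv_eq] at hpos

theorem IsLocalMin.deriv_deriv_nonneg (h : IsLocalMin f a) (hc : ContinuousAt f a) :
    0 ≤ deriv (deriv f) a := by
  simpa [deriv.neg'] using h.neg.deriv_deriv_nonpos hc.neg

end SecondDerivative

namespace Function.Periodic

variable {u : ℝ → ℝ} {T : ℝ}

theorem exists_isMaxOn_univ (hp : Periodic u T) (hT : T ≠ 0) (hu : Continuous u) :
    ∃ a, IsMaxOn u univ a := by
  obtain ⟨_, ⟨a, rfl⟩, ha⟩ := (hp.compact_of_continuous hT hu).exists_isGreatest (range_nonempty u)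
  exact ⟨a, fun x _ ↦ ha ⟨x, rfl⟩⟩

theorem exists_isMinOn_univ (hp : Periodic u T) (hT : T ≠ 0) (hu : Continuous u) :
    ∃ b, IsMinOn u univ b := by
  obtain ⟨_, ⟨b, rfl⟩, hb⟩ := (hp.compact_of_continuous hT hu).exists_isLeast (range_nonempty u)
  exact ⟨b, fun x _ ↦ hb ⟨x, rfl⟩⟩

end Function.Periodic

theorem exists_deriv_nonneg_of_le {g : ℝ → ℝ} (hg : Differentiable ℝ g) {a b : ℝ} (hab : a < b)
    (hgab : g a ≤ g b) : ∃ ξ ∈ Ioo a b, 0 ≤ deriv g ξ := by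
  obtain ⟨ξ, hξ, hslope⟩ := exists_deriv_eq_slope g hab hg.continuous.continuousOn
    hg.differentiableOn
  exact ⟨ξ, hξ, hslope ▸ div_nonneg (sub_nonneg.mpr hgab) (sub_nonneg.mpr hab.le)⟩

theorem exists_le_deriv_of_periodic_profile {f u : ℝ → ℝ} {c lam T : ℝ}
    (hf : Differentiable ℝ f) (hu : Continuous u) (hnonconst : ∃ x y, u x ≠ u y)
    (hT : T ≠ 0) (hper : Function.Periodic u T)
    (hode : ∀ x, deriv (deriv u) x + f (u x) - c * u x - lam = 0) :
    ∃ x, c ≤ deriv f (u x) := by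
  obtain ⟨a, ha⟩ := hper.exists_isMaxOn_univ hT hu
  obtain ⟨b, hb⟩ := hper.exists_isMinOn_univ hT hu
  have hba : u b < u a := by
    refine (hb (mem_univ a)).lt_of_ne fun hab ↦ ?_
    obtain ⟨x, y, hxy⟩ := hnonconst
    have hval : ∀ z, u z = u a := fun z ↦ le_antisymm (ha (mem_univ z)) (hab ▸ hb (mem_univ z))
    exact hxy ((hval x).trans (hval y).symm)
  set g : ℝ → ℝ := fun v ↦ f v - c * v - lam
  have hg : Differentiable ℝ g := (hf.sub (differentiable_id.const_mul c)).sub_const lam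
  have hga : 0 ≤ g (u a) := by
    linarith [hode a, (ha.isLocalMax univ_mem).deriv_deriv_nonpos hu.continuousAt]
  have hgb : g (u b) ≤ 0 := by
    linarith [hode b, (hb.isLocalMin univ_mem).deriv_deriv_nonneg hu.continuousAt]
  obtain ⟨ξ, hξ, hgξ⟩ := exists_deriv_nonneg_of_le hg hba (hgb.trans hga)
  have hderiv : deriv g ξ = deriv f ξ - c := by
    simpa [g] using (((hf ξ).hasDerivAt.sub ((hasDerivAt_id ξ).const_mul c)).sub_const lam).deriv
  obtain ⟨x, rfl⟩ : ξ ∈ range u :=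
    (isPreconnected_range hu).Icc_subset ⟨b, rfl⟩ ⟨a, rfl⟩ (Ioo_subset_Icc_self hξ)
  exact ⟨x, by linarith⟩

/-- Necessity of `f'(u₀) - c₀ ≥ 0` for the existence of a family of nonconstant
periodic traveling-wave profiles of gKdV converging uniformly to the constant state `u₀`
with speeds converging to `c₀`. -/
theorem necessary_condition_small_amplitude_waves
    (f : ℝ → ℝ) (hf : ContDiff ℝ 1 f)
    (u₀ c₀ : ℝ)
    (c lam : ℕ → ℝ) (u : ℕ → ℝ → ℝ)
    (hreg : ∀ n : ℕ, ContDiff ℝ 2 (u n))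
    (hnonconst : ∀ n : ℕ, ∃ x y : ℝ, u n x ≠ u n y)
    (hper : ∀ n : ℕ, ∃ T > 0, Function.Periodic (u n) T)
    (hode : ∀ n : ℕ, ∀ x : ℝ,
      deriv (deriv (u n)) x + f (u n x) - c n * u n x - lam n = 0)
    (hconv : ∀ ε > 0, ∃ N : ℕ, ∀ n ≥ N, ∀ x : ℝ, |u n x - u₀| ≤ ε)
    (hc : Tendsto c atTop (nhds c₀)) :
    deriv f u₀ - c₀ ≥ 0 := by
  have hwave : ∀ n, ∃ x, c n ≤ deriv f (u n x) := fun n ↦ by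
    obtain ⟨T, hT, hTper⟩ := hper n
    exact exists_le_deriv_of_periodic_profile (hf.differentiable one_ne_zero) (hreg n).continuous
      (hnonconst n) hT.ne' hTper (hode n)
  choose x hx using hwave
  have hux : Tendsto (fun n ↦ u n (x n)) atTop (𝓝 u₀) := by
    refine Metric.tendsto_atTop.mpr fun ε hε ↦ ?_
    obtain ⟨N, hN⟩ := hconv (ε / 2) (half_pos hε)
    exact ⟨N, fun n hn ↦ (hN n hn (x n)).trans_lt (half_lt_self hε)⟩
  have hlim : Tendsto (fun n ↦ deriv f (u n (x n))) atTop (𝓝 (deriv f u₀)) :=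
    ((hf.continuous_deriv le_rfl).tendsto u₀).comp hux
  linarith [le_of_tendsto_of_tendsto' hc hlim hx]
end

section
/- Let g: ℝ → ℂ be a Schwartz function and define ǧ(ξ,x) = (1/(2π)) Σ_{ℓ∈ℤ} e^{−iξ(x+ℓ)} g(x+ℓ). Then the Bloch-wave inversion formula holds: for every x ∈ ℝ, g(x) = ∫_{−π}^{π} e^{iξx} ǧ(ξ,x) dξ. -/
/-!
Expanding the product, the integrand is the Fourier series `∑ ℓ, (2π)⁻¹ g(x+ℓ) e^{-iℓξ}` in `ξ`,
which converges uniformly because the integer translates of a Schwartz function are absolutely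
summable. Integrating term by term over one period, orthogonality of the characters
`ξ ↦ e^{-iℓξ}` kills every term except `ℓ = 0`, which contributes `g(x)`.
-/

open Real MeasureTheory

section Schwartz

open scoped SchwartzMap

variable {E : Type*} [NormedAddCommGroup E] [NormedSpace ℝ E]

theorem SchwartzMap.summable_norm_int (f : 𝓢(ℝ, E)) : Summable fun n : ℤ => ‖f n‖ :=
  summable_of_isBigO (Real.summable_abs_int_rpow one_lt_two)
    ((f.isBigO_cocompact_rpow (-2)).norm_left.comp_tendsto Int.tendsto_coe_cofinite)

theorem SchwartzMap.summable_norm_add_int (f : 𝓢(ℝ, E)) (x : ℝ) :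
    Summable fun n : ℤ => ‖f (x + n)‖ := by
  simpa [add_comm] using (f.compSubConstCLM ℝ (-x)).summable_norm_int

end Schwartz

theorem integral_exp_int_mul_I (a : ℝ) (n : ℤ) :
    ∫ ξ in a..a + 2 * π, Complex.exp (n * Complex.I * ξ) = if n = 0 then 2 * (π : ℂ) else 0 := by
  split_ifs with hn
  · simp [hn]
  have hc : (n : ℂ) * Complex.I ≠ 0 := by simp [hn]
  rw [integral_exp_mul_complex hc, Complex.ofReal_add, mul_add, Complex.exp_add]
  have hperiod : Complex.exp (n * Complex.I * (2 * π : ℝ)) = 1 := by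
    rw [← Complex.exp_int_mul_two_pi_mul_I n]; push_cast; ring_nf
  rw [hperiod, mul_one, sub_self, zero_div]

theorem intervalIntegral_tsum_of_norm_le {ι E : Type*} [Countable ι] [NormedAddCommGroup E]
    [NormedSpace ℝ E] [CompleteSpace E] {F : ι → ℝ → E} {u : ι → ℝ} (a b : ℝ)
    (hF : ∀ i, Continuous (F i)) (hu : Summable u) (hFu : ∀ i t, ‖F i t‖ ≤ u i) :
    ∫ t in a..b, ∑' i, F i t = ∑' i, ∫ t in a..b, F i t :=
  (intervalIntegral.hasSum_integral_of_dominated_convergence (fun i _ => u i)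
    (fun i => (hF i).aestronglyMeasurable) (fun i => .of_forall fun t _ => hFu i t)
    (.of_forall fun _ _ => hu) intervalIntegrable_const
    (.of_forall fun t _ => (hu.of_norm_bounded (hFu · t)).hasSum)).tsum_eq.symm

/-- Bloch-wave inversion formula: `g(x) = ∫_{−π}^{π} e^{iξx} ǧ(ξ,x) dξ` where
`ǧ(ξ,x) = (1/(2π)) ∑_{ℓ∈ℤ} e^{−iξ(x+ℓ)} g(x+ℓ)`. -/
theorem blochWave_inversion (g : SchwartzMap ℝ ℂ) (x : ℝ) :
    g x = ∫ ξ in (-π)..π, Complex.exp (Complex.I * (ξ : ℂ) * (x : ℂ)) *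
      ((1 / (2 * (π : ℂ))) *
        ∑' ℓ : ℤ, Complex.exp (-Complex.I * (ξ : ℂ) * ((x : ℂ) + (ℓ : ℂ))) * g (x + ℓ)) := by
  set c : ℂ := 1 / (2 * π)
  set F : ℤ → ℝ → ℂ := fun ℓ ξ => c * g (x + ℓ) * Complex.exp ((-ℓ : ℤ) * Complex.I * ξ)
  have hF_integral (ℓ : ℤ) : ∫ ξ in (-π)..π, F ℓ ξ = if ℓ = 0 then g x else 0 := by
    have horth := integral_exp_int_mul_I (-π) (-ℓ)
    rw [show -π + 2 * π = π by ring] at horth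
    simp only [F, intervalIntegral.integral_const_mul, horth, neg_eq_zero]
    split_ifs with hℓ
    · simp only [c, hℓ, Int.cast_zero, add_zero]
      field_simp
    · exact mul_zero _
  have hF_bound (ℓ : ℤ) (ξ : ℝ) : ‖F ℓ ξ‖ ≤ ‖c‖ * ‖g (x + ℓ)‖ := by
    simp [F, Complex.norm_exp]
  have hF_sum (ξ : ℝ) : ∑' ℓ : ℤ, F ℓ ξ = Complex.exp (Complex.I * ξ * x) *
      (c * ∑' ℓ : ℤ, Complex.exp (-Complex.I * ξ * (x + ℓ)) * g (x + ℓ)) := by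
    rw [← tsum_mul_left, ← tsum_mul_left]
    refine tsum_congr fun ℓ => ?_
    simp only [F, mul_left_comm _ c, ← mul_assoc, ← Complex.exp_add]
    push_cast
    ring_nf
  calc g x = ∑' ℓ : ℤ, ∫ ξ in (-π)..π, F ℓ ξ := by simp only [hF_integral, tsum_ite_eq]
    _ = ∫ ξ in (-π)..π, ∑' ℓ : ℤ, F ℓ ξ :=
      (intervalIntegral_tsum_of_norm_le _ _ (fun ℓ => by fun_prop)
        ((g.summable_norm_add_int x).mul_left ‖c‖) hF_bound).symm
    _ = _ := by simp only [hF_sum]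
end

section
/- Let g: ℝ → ℂ be a Schwartz function and define ǧ(ξ,x) = (1/(2π)) Σ_{ℓ∈ℤ} e^{−iξ(x+ℓ)} g(x+ℓ). Then the Floquet–Bloch transform is, up to a factor of √(2π), an isometry: ∫_{−π}^{π} ∫_{0}^{1} |ǧ(ξ,x)|² dx dξ = (1/(2π)) ∫_ℝ |g(x)|² dx. -/
/-!
Factoring out `e^{-iξx}`, the integral over `x ∈ [0, 1]` of `|∑_ℓ e^{-iξ(x+ℓ)} g(x+ℓ)|²` expands
into the double series `∑_{k,l} e^{-iξ(k-l)} ∫_0^1 g(x+k) conj (g(x+l)) dx`. Integrating over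
`ξ ∈ [-π, π]` kills every off-diagonal term by orthogonality of the characters `e^{-iξk}`, leaving
`2π ∑_ℓ ∫_0^1 |g(x+ℓ)|² dx = 2π ∫_ℝ |g|²`. The decay of `g` makes the translates `g(· + ℓ)`
uniformly summable on `[0, 1]`, which justifies every exchange of sums and integrals.
-/

open Real MeasureTheory Set Filter TopologicalSpace

theorem intervalIntegral.integral_tsum_of_norm_le {ι E : Type*} [Countable ι]
    [NormedAddCommGroup E] [NormedSpace ℝ E] {a b : ℝ} {f : ι → ℝ → E} {B : ι → ℝ}
    (hf : ∀ i, Continuous (f i)) (hB : Summable B) (hfB : ∀ i, ∀ x ∈ uIcc a b, ‖f i x‖ ≤ B i) :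
    ∫ x in a..b, ∑' i, f i x = ∑' i, ∫ x in a..b, f i x :=
  (intervalIntegral.tsum_intervalIntegral_eq_of_summable_norm (f := fun i => ⟨f i, hf i⟩) <|
    hB.of_nonneg_of_le (fun _ => norm_nonneg _) fun i =>
      (ContinuousMap.norm_le _ ((norm_nonneg _).trans (hfB i a left_mem_uIcc))).2
        fun x => hfB i x x.2).symm

theorem integral_exp_neg_I_mul_int (k : ℤ) :
    ∫ ξ in (-π)..π, Complex.exp (-Complex.I * ξ * k) = if k = 0 then 2 * (π : ℂ) else 0 := by
  split_ifs with hk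
  · simp [hk, two_mul]
  · have hc : -Complex.I * k ≠ 0 := by simp [hk]
    have h2π : Complex.exp (-Complex.I * k * π) = Complex.exp (-Complex.I * k * (-π : ℝ)) := by
      rw [Complex.exp_eq_exp_iff_exists_int]
      exact ⟨-k, by push_cast; ring⟩
    simp_rw [mul_right_comm _ _ (k : ℂ)]
    rw [integral_exp_mul_complex hc, h2π, sub_self, zero_div]

theorem integral_tsum_exp_mul_eq_two_pi_mul_tsum_diag {c : ℤ × ℤ → ℂ}
    (hc : Summable fun p => ‖c p‖) :
    ∫ ξ in (-π)..π, ∑' p : ℤ × ℤ, Complex.exp (-Complex.I * ξ * (p.1 - p.2)) * c p =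
      2 * π * ∑' ℓ : ℤ, c (ℓ, ℓ) := by
  have hdiag : (Function.support fun p : ℤ × ℤ => if p.1 = p.2 then 2 * π * c p else 0) ⊆
      range fun ℓ => (ℓ, ℓ) := by
    rintro ⟨k, l⟩ hp
    obtain rfl : k = l := by by_contra h; simp [h] at hp
    exact ⟨k, rfl⟩
  rw [intervalIntegral.integral_tsum_of_norm_le (fun _ => by fun_prop) hc
    fun p ξ _ => by simp [Complex.norm_exp]]
  simp_rw [intervalIntegral.integral_mul_const, ← Int.cast_sub, integral_exp_neg_I_mul_int,
    sub_eq_zero, ite_mul, zero_mul, ← tsum_mul_left]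
  have hinj : Function.Injective fun ℓ : ℤ => (ℓ, ℓ) := fun _ _ h => congrArg Prod.fst h
  rw [← hinj.tsum_eq hdiag]
  simp

theorem intervalIntegral.integral_tsum_mul_star_tsum {ι 𝕜 : Type*} [Countable ι] [RCLike 𝕜]
    {a b : ℝ} {u : ι → ℝ → 𝕜} {B : ι → ℝ} (hu : ∀ i, Continuous (u i)) (hB : Summable B)
    (huB : ∀ i, ∀ x ∈ uIcc a b, ‖u i x‖ ≤ B i) :
    ∫ x in a..b, (∑' i, u i x) * star (∑' i, u i x) =
      ∑' p : ι × ι, ∫ x in a..b, u p.1 x * star (u p.2 x) := by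
  have hB0 : ∀ i, 0 ≤ B i := fun i => (norm_nonneg _).trans (huB i a left_mem_uIcc)
  rw [← intervalIntegral.integral_tsum_of_norm_le (fun p => by fun_prop)
    (hB.mul_of_nonneg hB hB0 hB0) fun p x hx => ?_]
  · refine intervalIntegral.integral_congr fun x hx => ?_
    have hsum : Summable fun i => ‖u i x‖ :=
      hB.of_nonneg_of_le (fun _ => norm_nonneg _) fun i => huB i x hx
    rw [tsum_star]
    exact tsum_mul_tsum_of_summable_norm hsum (by simpa only [norm_star] using hsum)
  · rw [norm_mul, norm_star]
    exact mul_le_mul (huB _ x hx) (huB _ x hx) (norm_nonneg _) (hB0 _)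

theorem integral_integral_norm_tsum_exp_mul_sq {a b : ℝ} {h : ℤ → ℝ → ℂ} {B : ℤ → ℝ}
    (hh : ∀ ℓ, Continuous (h ℓ)) (hB : Summable B) (hhB : ∀ ℓ, ∀ x ∈ uIcc a b, ‖h ℓ x‖ ≤ B ℓ) :
    ∫ ξ in (-π)..π, ∫ x in a..b, ‖∑' ℓ : ℤ, Complex.exp (-Complex.I * ξ * ℓ) * h ℓ x‖ ^ 2 =
      2 * π * ∑' ℓ : ℤ, ∫ x in a..b, ‖h ℓ x‖ ^ 2 := by
  set c : ℤ × ℤ → ℂ := fun p => ∫ x in a..b, h p.1 x * star (h p.2 x)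
  have hB0 : ∀ ℓ, 0 ≤ B ℓ := fun ℓ => (norm_nonneg _).trans (hhB ℓ a left_mem_uIcc)
  have hc : Summable fun p => ‖c p‖ := by
    refine ((hB.mul_of_nonneg hB hB0 hB0).mul_right |b - a|).of_nonneg_of_le
      (fun _ => norm_nonneg _) fun p => ?_
    refine intervalIntegral.norm_integral_le_of_norm_le_const fun x hx => ?_
    rw [norm_mul, norm_star]
    exact mul_le_mul (hhB _ x (uIoc_subset_uIcc hx)) (hhB _ x (uIoc_subset_uIcc hx))
      (norm_nonneg _) (hB0 _)
  have hinner (ξ : ℝ) :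
      ∫ x in a..b, (∑' ℓ : ℤ, Complex.exp (-Complex.I * ξ * ℓ) * h ℓ x) *
          star (∑' ℓ : ℤ, Complex.exp (-Complex.I * ξ * ℓ) * h ℓ x) =
        ∑' p : ℤ × ℤ, Complex.exp (-Complex.I * ξ * (p.1 - p.2)) * c p := by
    rw [intervalIntegral.integral_tsum_mul_star_tsum (fun _ => by fun_prop) hB
      fun ℓ x hx => by simpa [Complex.norm_exp] using hhB ℓ x hx]
    refine tsum_congr fun p => ?_
    rw [← intervalIntegral.integral_const_mul]
    refine intervalIntegral.integral_congr fun x _ => ?_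
    have hstar : star (Complex.exp (-Complex.I * ξ * p.2)) = Complex.exp (Complex.I * ξ * p.2) := by
      rw [Complex.star_def, ← Complex.exp_conj]
      simp
    simp only [star_mul', hstar]
    rw [mul_mul_mul_comm, ← Complex.exp_add]
    ring_nf
  apply Complex.ofReal_injective
  calc _ = ∫ ξ in (-π)..π, ∫ x in a..b,
        (∑' ℓ : ℤ, Complex.exp (-Complex.I * ξ * ℓ) * h ℓ x) *
          star (∑' ℓ : ℤ, Complex.exp (-Complex.I * ξ * ℓ) * h ℓ x) := by
        simp_rw [Complex.star_def, Complex.mul_conj', ← Complex.ofReal_pow,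
          intervalIntegral.integral_ofReal]
    _ = 2 * π * ∑' ℓ : ℤ, c (ℓ, ℓ) := by
        simp_rw [hinner]
        exact integral_tsum_exp_mul_eq_two_pi_mul_tsum_diag hc
    _ = _ := by
        simp_rw [c, Complex.star_def, Complex.mul_conj', ← Complex.ofReal_pow,
          intervalIntegral.integral_ofReal, ← Complex.ofReal_tsum]
        norm_cast

theorem SchwartzMap.exists_summable_bound_comp_add_int {E : Type*} [NormedAddCommGroup E]
    [NormedSpace ℝ E] (g : SchwartzMap ℝ E) {s : Set ℝ} (hs : IsCompact s) :
    ∃ B : ℤ → ℝ, Summable B ∧ ∀ ℓ : ℤ, ∀ x ∈ s, ‖g (x + ℓ)‖ ≤ B ℓ := by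
  have hdecay : g.toContinuousMap =O[cocompact ℝ] fun x => |x| ^ (-2 : ℝ) := by
    simp only [← Real.norm_eq_abs]
    exact g.isBigO_cocompact_rpow (-2)
  let K : Compacts ℝ := ⟨s, hs⟩
  let translate (ℓ : ℤ) : C(K, E) :=
    (g.toContinuousMap.comp (ContinuousMap.addRight (ℓ : ℝ))).restrict K
  refine ⟨fun ℓ => ‖translate ℓ‖, ?_, fun ℓ x hx => (translate ℓ).norm_coe_le_norm ⟨x, hx⟩⟩
  exact summable_of_isBigO (Real.summable_abs_int_rpow one_lt_two)
    ((isBigO_norm_restrict_cocompact _ two_pos hdecay K).comp_tendsto Int.tendsto_coe_cofinite)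

theorem SchwartzMap.tsum_intervalIntegral_norm_comp_add_int_sq {E : Type*} [NormedAddCommGroup E]
    [NormedSpace ℝ E] (g : SchwartzMap ℝ E) :
    ∑' ℓ : ℤ, ∫ x in (0 : ℝ)..1, ‖g (x + ℓ)‖ ^ 2 = ∫ x, ‖g x‖ ^ 2 :=
  ((g.memLp 2).integrable_norm_pow two_ne_zero).hasSum_intervalIntegral_comp_add_int.tsum_eq

/-- The Floquet–Bloch transform is, up to a factor `√(2π)`, an isometry:
`∫_{−π}^{π} ∫_{0}^{1} |ǧ(ξ,x)|² dx dξ = (1/(2π)) ∫_ℝ |g(x)|² dx`. -/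
theorem floquetBloch_isometry (g : SchwartzMap ℝ ℂ) :
    (∫ ξ in (-π)..π, ∫ x in (0:ℝ)..1,
      ‖(1 / (2 * (π : ℂ))) *
        ∑' ℓ : ℤ, Complex.exp (-Complex.I * (ξ : ℂ) * ((x : ℂ) + (ℓ : ℂ))) * g (x + ℓ)‖ ^ 2) =
      (1 / (2 * π)) * ∫ x : ℝ, ‖g x‖ ^ 2 := by
  obtain ⟨B, hB, hgB⟩ := g.exists_summable_bound_comp_add_int (isCompact_uIcc (a := 0) (b := 1))
  have hfactor (ξ x : ℝ) :
      ‖(1 / (2 * (π : ℂ))) *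
        ∑' ℓ : ℤ, Complex.exp (-Complex.I * (ξ : ℂ) * ((x : ℂ) + (ℓ : ℂ))) * g (x + ℓ)‖ ^ 2 =
      (1 / (2 * π)) ^ 2 * ‖∑' ℓ : ℤ, Complex.exp (-Complex.I * ξ * ℓ) * g (x + ℓ)‖ ^ 2 := by
    have hunit : ‖Complex.exp (-Complex.I * ξ * x)‖ = 1 := by simp [Complex.norm_exp]
    have hconst : ‖1 / (2 * (π : ℂ))‖ = 1 / (2 * π) := by simp [abs_of_pos pi_pos]
    simp_rw [mul_add, Complex.exp_add, mul_assoc (Complex.exp _), tsum_mul_left, norm_mul, hunit,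
      hconst]
    ring
  simp_rw [hfactor, intervalIntegral.integral_const_mul,
    integral_integral_norm_tsum_exp_mul_sq (fun ℓ => by fun_prop) hB hgB,
    g.tsum_intervalIntegral_norm_comp_add_int_sq]
  field_simp
end

section
/- Let k₀ > 0 and Λ(ζ) = −i·k₀³·ζ·(4π² − ζ²). If ζ, ζ' ∈ ℝ satisfy ζ − ζ' ∈ 2πℤ, ζ ≠ ζ', and Λ(ζ) = Λ(ζ'), then Λ(ζ) = 0 and both ζ and ζ' belong to {−2π, 0, 2π}. In particular, every nonzero eigenvalue Λ(2πj + ξ) (j ∈ ℤ, ξ ∈ (−π,π]) of the constant-coefficient Bloch symbol is attained for exactly one value of j, while the eigenvalue 0 occurs only at Floquet exponent ξ = 0, where it is attained exactly for j ∈ {−1, 0, 1}. -/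
/-!
Up to the nonzero factor `-i k₀³`, `Λ` is the real odd cubic `p(ζ) = ζ (4π² - ζ²)`, with roots
`0, ±2π`. For `ζ ≠ ζ'`, `p ζ = p ζ'` is equivalent to `ζ² + ζζ' + ζ'² = 4π²`; writing
`ζ, ζ' = s ± πm` with `m ∈ ℤ` this reads `3s² = π²(4 - m²)`, which forces `|m| ∈ {1, 2}` and then
`ζ, ζ' ∈ {-2π, 0, 2π}`, where `p` vanishes. The statements about Floquet exponents follow because
every real number is `2πj + ξ` for a unique `j ∈ ℤ` and `ξ ∈ (-π, π]`.
-/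

open Real Set

lemma sq_add_mul_add_sq_eq_of_mul_sub_sq_eq {c x y : ℝ} (hne : x ≠ y)
    (h : x * (c - x ^ 2) = y * (c - y ^ 2)) : x ^ 2 + x * y + y ^ 2 = c := by
  have hfac : (x - y) * (c - (x ^ 2 + x * y + y ^ 2)) = 0 := by linear_combination h
  linarith [(mul_eq_zero.mp hfac).resolve_left (sub_ne_zero.mpr hne)]

lemma mul_sub_sq_eq_zero_iff {a x : ℝ} :
    x * (4 * a ^ 2 - x ^ 2) = 0 ↔ x ∈ ({-(2 * a), 0, 2 * a} : Set ℝ) := by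
  have hfac : x * (4 * a ^ 2 - x ^ 2) = -((x + 2 * a) * x * (x - 2 * a)) := by ring
  simp only [hfac, neg_eq_zero, mul_eq_zero, add_eq_zero_iff_eq_neg, sub_eq_zero,
    mem_insert_iff, mem_singleton_iff, or_assoc]

lemma mem_of_sq_add_mul_add_sq_eq {a x y : ℝ} {m : ℤ} (hm : x - y = 2 * a * m) (hne : x ≠ y)
    (h : x ^ 2 + x * y + y ^ 2 = 4 * a ^ 2) :
    x ∈ ({-(2 * a), 0, 2 * a} : Set ℝ) ∧ y ∈ ({-(2 * a), 0, 2 * a} : Set ℝ) := by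
  have hm0 : m ≠ 0 := by
    rintro rfl
    exact hne (by simpa [sub_eq_zero] using hm)
  wlog hm_pos : 0 < m generalizing x y m
  · exact (this (m := -m) (by push_cast; linarith) hne.symm (by linarith) (neg_ne_zero.mpr hm0)
      (by omega)).symm
  have ha : a ≠ 0 := by
    rintro rfl
    exact hne (by simpa [sub_eq_zero] using hm)
  have hy : y = x - 2 * a * m := by linarith
  subst hy
  have hkey : 3 * (x - a * m) ^ 2 = a ^ 2 * (4 - m ^ 2) := by linear_combination h
  have hm_le : m ≤ 2 := by
    have hnonneg : (0 : ℝ) ≤ 4 - m ^ 2 :=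
      (mul_nonneg_iff_of_pos_left (sq_pos_of_ne_zero ha)).mp (hkey ▸ by positivity)
    have hsq : m ^ 2 ≤ 4 := by exact_mod_cast (sub_nonneg.mp hnonneg)
    nlinarith
  simp only [mem_insert_iff, mem_singleton_iff]
  interval_cases m
  · have hx : x * (x - 2 * a) = 0 := by push_cast at hkey; linear_combination hkey / 3
    rcases mul_eq_zero.mp hx with hx | hx
    · exact ⟨by simp [hx], by left; push_cast; linarith⟩
    · exact ⟨by right; right; linarith, by right; left; push_cast; linarith⟩
  · have hx : (x - 2 * a) ^ 2 = 0 := by push_cast at hkey; linear_combination hkey / 3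
    have hx : x = 2 * a := by linarith [pow_eq_zero_iff (n := 2) two_ne_zero |>.mp hx]
    exact ⟨by simp [hx], by left; push_cast; linarith⟩

lemma eq_zero_and_eq_of_two_mul_mul_add_eq {a ξ : ℝ} (hξ : ξ ∈ Ioc (-a) a) {j n : ℤ}
    (h : 2 * a * j + ξ = 2 * a * n) : ξ = 0 ∧ j = n := by
  have hξ_eq : ξ = 2 * a * (n - j) := by linarith
  have hbounds : (-1 : ℝ) < 2 * (n - j) ∧ 2 * (n - j : ℝ) ≤ 1 := by
    constructor <;> nlinarith [hξ.1, hξ.2]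
  have hjn : j = n := by
    have hbounds' : -1 < 2 * (n - j) ∧ 2 * (n - j) ≤ 1 := by exact_mod_cast hbounds
    omega
  subst hjn
  simpa using hξ_eq

lemma eq_zero_and_mem_of_two_mul_mul_add_mem {a ξ : ℝ} (hξ : ξ ∈ Ioc (-a) a) {j : ℤ}
    (h : 2 * a * j + ξ ∈ ({-(2 * a), 0, 2 * a} : Set ℝ)) :
    ξ = 0 ∧ j ∈ ({-1, 0, 1} : Set ℤ) := by
  have hn : ∃ n ∈ ({-1, 0, 1} : Set ℤ), 2 * a * j + ξ = 2 * a * n := by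
    simp only [mem_insert_iff, mem_singleton_iff] at h
    rcases h with h | h | h
    · exact ⟨-1, by simp, by push_cast; linarith⟩
    · exact ⟨0, by simp, by push_cast; linarith⟩
    · exact ⟨1, by simp, by push_cast; linarith⟩
  obtain ⟨n, hn_mem, hn_eq⟩ := hn
  obtain ⟨hξ0, rfl⟩ := eq_zero_and_eq_of_two_mul_mul_add_eq hξ hn_eq
  exact ⟨hξ0, hn_mem⟩

lemma symbol_eq_mul_ofReal {k₀ : ℝ} {Λ : ℝ → ℂ}
    (hΛ : ∀ ζ : ℝ, Λ ζ = -Complex.I * (k₀ : ℂ) ^ 3 * (ζ : ℂ) * (4 * (π : ℂ) ^ 2 - (ζ : ℂ) ^ 2))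
    (ζ : ℝ) : Λ ζ = -Complex.I * (k₀ : ℂ) ^ 3 * ((ζ * (4 * π ^ 2 - ζ ^ 2) : ℝ) : ℂ) := by
  rw [hΛ]
  push_cast
  ring

lemma symbol_eq_zero_iff {k₀ : ℝ} (hk₀ : k₀ ≠ 0) {Λ : ℝ → ℂ}
    (hΛ : ∀ ζ : ℝ, Λ ζ = -Complex.I * (k₀ : ℂ) ^ 3 * (ζ : ℂ) * (4 * (π : ℂ) ^ 2 - (ζ : ℂ) ^ 2))
    (ζ : ℝ) : Λ ζ = 0 ↔ ζ ∈ ({-(2 * π), 0, 2 * π} : Set ℝ) := by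
  rw [symbol_eq_mul_ofReal hΛ, mul_eq_zero, or_iff_right (by simp [hk₀]),
    Complex.ofReal_eq_zero, mul_sub_sq_eq_zero_iff]

lemma symbol_eq_symbol_iff {k₀ : ℝ} (hk₀ : k₀ ≠ 0) {Λ : ℝ → ℂ}
    (hΛ : ∀ ζ : ℝ, Λ ζ = -Complex.I * (k₀ : ℂ) ^ 3 * (ζ : ℂ) * (4 * (π : ℂ) ^ 2 - (ζ : ℂ) ^ 2))
    (ζ ζ' : ℝ) : Λ ζ = Λ ζ' ↔ ζ * (4 * π ^ 2 - ζ ^ 2) = ζ' * (4 * π ^ 2 - ζ' ^ 2) := by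
  rw [symbol_eq_mul_ofReal hΛ, symbol_eq_mul_ofReal hΛ, mul_right_inj' (by simp [hk₀]),
    Complex.ofReal_inj]

/-- Multiplicity structure of the eigenvalues `Λ(2πj + ξ)` of the constant-coefficient
Bloch symbol, where `Λ(ζ) = −ik₀³ζ(4π² − ζ²)`: two distinct arguments differing by a
multiple of `2π` give the same value only at the triple eigenvalue `0`, attained at
`ζ ∈ {−2π, 0, 2π}`; nonzero eigenvalues are simple, and the eigenvalue `0` occurs only
at Floquet exponent `ξ = 0`, exactly for `j ∈ {−1, 0, 1}`. -/
theorem constantCoefficient_eigenvalue_multiplicity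
    (k₀ : ℝ) (hk₀ : 0 < k₀) (Λ : ℝ → ℂ)
    (hΛ : ∀ ζ : ℝ, Λ ζ = -Complex.I * (k₀ : ℂ) ^ 3 * (ζ : ℂ) * (4 * (π : ℂ) ^ 2 - (ζ : ℂ) ^ 2)) :
    (∀ ζ ζ' : ℝ, (∃ m : ℤ, ζ - ζ' = 2 * π * m) → ζ ≠ ζ' → Λ ζ = Λ ζ' →
      Λ ζ = 0 ∧ ζ ∈ ({-(2 * π), 0, 2 * π} : Set ℝ) ∧ ζ' ∈ ({-(2 * π), 0, 2 * π} : Set ℝ)) ∧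
    (∀ ξ ∈ Set.Ioc (-π) π, ∀ j j' : ℤ,
      Λ (2 * π * j + ξ) ≠ 0 → Λ (2 * π * j + ξ) = Λ (2 * π * j' + ξ) → j = j') ∧
    (∀ ξ ∈ Set.Ioc (-π) π, ∀ j : ℤ,
      Λ (2 * π * j + ξ) = 0 → ξ = 0 ∧ j ∈ ({-1, 0, 1} : Set ℤ)) ∧
    (∀ j : ℤ, j ∈ ({-1, 0, 1} : Set ℤ) → Λ (2 * π * j) = 0) := by
  have hcoincide : ∀ ζ ζ' : ℝ, (∃ m : ℤ, ζ - ζ' = 2 * π * m) → ζ ≠ ζ' → Λ ζ = Λ ζ' →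
      Λ ζ = 0 ∧ ζ ∈ ({-(2 * π), 0, 2 * π} : Set ℝ) ∧ ζ' ∈ ({-(2 * π), 0, 2 * π} : Set ℝ) := by
    rintro ζ ζ' ⟨m, hm⟩ hne hΛeq
    have hmem := mem_of_sq_add_mul_add_sq_eq hm hne
      (sq_add_mul_add_sq_eq_of_mul_sub_sq_eq hne ((symbol_eq_symbol_iff hk₀.ne' hΛ ζ ζ').mp hΛeq))
    exact ⟨(symbol_eq_zero_iff hk₀.ne' hΛ ζ).mpr hmem.1, hmem⟩
  refine ⟨hcoincide, fun ξ _ j j' hΛ0 hΛeq => ?_, fun ξ hξ j hΛ0 => ?_, fun j hj => ?_⟩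
  · by_contra hjj
    have hne : 2 * π * j + ξ ≠ 2 * π * j' + ξ := fun h =>
      hjj (by exact_mod_cast mul_left_cancel₀ two_pi_pos.ne' (add_right_cancel h))
    exact hΛ0 (hcoincide _ _ ⟨j - j', by push_cast; ring⟩ hne hΛeq).1
  · exact eq_zero_and_mem_of_two_mul_mul_add_mem hξ ((symbol_eq_zero_iff hk₀.ne' hΛ _).mp hΛ0)
  · rw [symbol_eq_zero_iff hk₀.ne' hΛ]
    rcases hj with rfl | rfl | rfl <;> simp
end

section
/- Let k₀ > 0 and Λ(ζ) = −i·k₀³·ζ·(4π² − ζ²). Then there exist ε > 0 and C > 0, depending only on k₀, such that for every ξ ∈ [−π, π], every j ∈ ℤ with |j| ≥ 2, every r with 0 < r ≤ ε·j², and every λ ∈ ℂ with |λ − Λ(2πj + ξ)| = r, one has for all m ∈ ℤ: (1 + |2πm + ξ|)/|λ − Λ(2πm + ξ)| ≤ C·|j|/r. -/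
/-!
With `a = 2πj + ξ` and `b = 2πm + ξ` one has
`Λ(a) - Λ(b) = i k₀³ (a - b)(a² + ab + b² - 4π²)`. For `m ≠ j` the first factor is at least
`2π` and, because `|a| ≥ 3π|j|/2 ≥ 3π`, the quadratic factor is at least `(a² + b²)/8`, so
`|Λ(a) - Λ(b)| ≥ k₀³ (a² + b²)/2 ≥ 2r` once `r ≤ k₀³ j²`. Then `λ` stays at distance at least
`|Λ(a) - Λ(b)|/2` from `Λ(b)`, whose quadratic growth in `b` absorbs the weight `1 + |b|`.
For `m = j` the distance is exactly `r`, and `1 + |a| ≤ 9|j|`.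
-/

open Real

noncomputable def blochSymbol (k₀ ζ : ℝ) : ℂ :=
  -Complex.I * (k₀ : ℂ) ^ 3 * (ζ : ℂ) * (4 * (π : ℂ) ^ 2 - (ζ : ℂ) ^ 2)

lemma blochSymbol_sub (k₀ x y : ℝ) :
    blochSymbol k₀ x - blochSymbol k₀ y =
      Complex.I * ((k₀ ^ 3 * (x - y) * (x ^ 2 + x * y + y ^ 2 - 4 * π ^ 2) : ℝ) : ℂ) := by
  simp only [blochSymbol]
  push_cast
  ring

lemma norm_blochSymbol_sub (k₀ x y : ℝ) :
    ‖blochSymbol k₀ x - blochSymbol k₀ y‖ =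
      |k₀| ^ 3 * |x - y| * |x ^ 2 + x * y + y ^ 2 - 4 * π ^ 2| := by
  rw [blochSymbol_sub, norm_mul, Complex.norm_I, one_mul, Complex.norm_real, norm_eq_abs,
    abs_mul, abs_mul, abs_pow]

lemma add_sq_div_eight_le {a b p : ℝ} (ha : 9 * p ^ 2 ≤ a ^ 2) :
    (a ^ 2 + b ^ 2) / 8 ≤ a ^ 2 + a * b + b ^ 2 - 4 * p ^ 2 := by
  nlinarith [sq_nonneg (7 * b + 4 * a)]

lemma norm_blochSymbol_sub_ge {k₀ a b : ℝ} (ha : 3 * π ≤ |a|) (hab : 2 * π ≤ |a - b|) :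
    |k₀| ^ 3 * (a ^ 2 + b ^ 2) / 2 ≤ ‖blochSymbol k₀ a - blochSymbol k₀ b‖ := by
  have ha2 : 9 * π ^ 2 ≤ a ^ 2 := by
    rw [← sq_abs a]; nlinarith [pi_pos]
  have hquad := add_sq_div_eight_le (b := b) ha2
  have hquad0 : 0 ≤ a ^ 2 + a * b + b ^ 2 - 4 * π ^ 2 :=
    (by positivity : (0 : ℝ) ≤ (a ^ 2 + b ^ 2) / 8).trans hquad
  rw [norm_blochSymbol_sub, abs_of_nonneg hquad0]
  calc |k₀| ^ 3 * (a ^ 2 + b ^ 2) / 2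
      ≤ |k₀| ^ 3 * (2 * π * ((a ^ 2 + b ^ 2) / 8)) := by
        have : 0 ≤ |k₀| ^ 3 * (a ^ 2 + b ^ 2) := by positivity
        nlinarith [pi_gt_three]
    _ ≤ |k₀| ^ 3 * (|a - b| * (a ^ 2 + a * b + b ^ 2 - 4 * π ^ 2)) := by gcongr
    _ = |k₀| ^ 3 * |a - b| * (a ^ 2 + a * b + b ^ 2 - 4 * π ^ 2) := by ring

lemma half_norm_sub_le_norm_sub {E : Type*} [SeminormedAddCommGroup E] {x y z : E}
    (h : ‖x - y‖ ≤ ‖y - z‖ / 2) : ‖y - z‖ / 2 ≤ ‖x - z‖ := by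
  linarith [norm_sub_le_norm_sub_add_norm_sub y x z, norm_sub_rev x y]

section Frequencies

variable {j ξ : ℝ}

lemma abs_two_pi_mul_add_ge (hξ : |ξ| ≤ π) (hj : 2 ≤ |j|) :
    3 * π / 2 * |j| ≤ |2 * π * j + ξ| := by
  have h := abs_sub_abs_le_abs_sub (2 * π * j) (-ξ)
  rw [sub_neg_eq_add, abs_neg, abs_mul, abs_of_pos two_pi_pos] at h
  nlinarith [pi_pos]

lemma one_add_abs_two_pi_mul_add_le (hξ : |ξ| ≤ π) (hj : 2 ≤ |j|) :
    1 + |2 * π * j + ξ| ≤ 9 * |j| := by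
  have h := abs_add_le (2 * π * j) ξ
  rw [abs_mul, abs_of_pos two_pi_pos] at h
  nlinarith [pi_lt_d2]

end Frequencies

lemma two_pi_le_abs_sub_of_ne {j m : ℤ} (h : m ≠ j) (ξ : ℝ) :
    2 * π ≤ |2 * π * j + ξ - (2 * π * m + ξ)| := by
  have hjm : (1 : ℝ) ≤ |(j : ℝ) - m| := by
    exact_mod_cast Int.one_le_abs (sub_ne_zero.mpr h.symm)
  rw [show 2 * π * j + ξ - (2 * π * m + ξ) = 2 * π * ((j : ℝ) - m) by ring, abs_mul,
    abs_of_pos two_pi_pos]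
  nlinarith [pi_pos]

lemma one_add_abs_div_norm_sub_blochSymbol_le {k₀ a b r J : ℝ} {lam : ℂ} (hJ : 2 ≤ J)
    (ha : 3 * π / 2 * J ≤ |a|) (hab : 2 * π ≤ |a - b|) (hr : 0 < r)
    (hrJ : r ≤ |k₀| ^ 3 * J ^ 2) (hlam : ‖lam - blochSymbol k₀ a‖ = r) :
    (1 + |b|) / ‖lam - blochSymbol k₀ b‖ ≤ 9 * J / r := by
  set D := ‖blochSymbol k₀ a - blochSymbol k₀ b‖
  have hJa : 4 * J ≤ |a| := by nlinarith [pi_gt_three]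
  have hD : |k₀| ^ 3 * (a ^ 2 + b ^ 2) / 2 ≤ D :=
    norm_blochSymbol_sub_ge (by nlinarith [pi_pos]) hab
  have hsep : 2 * r ≤ D := by
    have hJa2 : 16 * J ^ 2 ≤ a ^ 2 := by rw [← sq_abs a]; nlinarith
    have : 0 ≤ |k₀| ^ 3 * b ^ 2 := by positivity
    nlinarith [mul_le_mul_of_nonneg_left hJa2 (by positivity : (0 : ℝ) ≤ |k₀| ^ 3)]
  have hfar : D / 2 ≤ ‖lam - blochSymbol k₀ b‖ :=
    half_norm_sub_le_norm_sub (by rw [hlam]; linarith)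
  have hweight : (1 + |b|) * J ≤ 9 / 4 * (a ^ 2 + b ^ 2) := by
    rw [← sq_abs a, ← sq_abs b]
    nlinarith [abs_nonneg b, sq_nonneg (|a| - |b|)]
  rw [div_le_div_iff₀ (by linarith) hr]
  calc (1 + |b|) * r
      ≤ (1 + |b|) * (|k₀| ^ 3 * J ^ 2) := by gcongr
    _ = |k₀| ^ 3 * J * ((1 + |b|) * J) := by ring
    _ ≤ |k₀| ^ 3 * J * (9 / 4 * (a ^ 2 + b ^ 2)) := by gcongr
    _ = 9 * J * (|k₀| ^ 3 * (a ^ 2 + b ^ 2) / 4) := by ring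
    _ ≤ 9 * J * ‖lam - blochSymbol k₀ b‖ := by gcongr; linarith

/-- Scalar version of the resolvent estimate `‖(λI − L_ξ⁰)^{−1}‖_{L² → H¹} ≲ |j|/r` on
circles of radius `r ≤ ε j²` around the eigenvalue `Λ(2πj + ξ)` of the
constant-coefficient Bloch symbol, where `Λ(ζ) = −ik₀³ζ(4π² − ζ²)`. -/
theorem constantCoefficient_resolvent_estimate
    (k₀ : ℝ) (hk₀ : 0 < k₀) (Λ : ℝ → ℂ)
    (hΛ : ∀ ζ : ℝ, Λ ζ = -Complex.I * (k₀ : ℂ) ^ 3 * (ζ : ℂ) * (4 * (π : ℂ) ^ 2 - (ζ : ℂ) ^ 2)) :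
    ∃ ε > 0, ∃ C > 0, ∀ ξ ∈ Set.Icc (-π) π, ∀ j : ℤ, 2 ≤ |j| →
      ∀ r : ℝ, 0 < r → r ≤ ε * (j : ℝ) ^ 2 →
        ∀ lam : ℂ, ‖lam - Λ (2 * π * j + ξ)‖ = r →
          ∀ m : ℤ,
            (1 + |2 * π * m + ξ|) / ‖lam - Λ (2 * π * m + ξ)‖
              ≤ C * |(j : ℝ)| / r := by
  obtain rfl : Λ = blochSymbol k₀ := funext hΛ
  refine ⟨|k₀| ^ 3, pow_pos (abs_pos.mpr hk₀.ne') 3, 9, by norm_num, ?_⟩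
  rintro ξ hξ j hj r hr hrε lam hlam m
  have hξ' : |ξ| ≤ π := abs_le.mpr hξ
  have hJ : (2 : ℝ) ≤ |(j : ℝ)| := by exact_mod_cast hj
  rcases eq_or_ne m j with rfl | hmj
  · rw [hlam]
    exact div_le_div_of_nonneg_right (one_add_abs_two_pi_mul_add_le hξ' hJ) hr.le
  · exact one_add_abs_div_norm_sub_blochSymbol_le hJ (abs_two_pi_mul_add_ge hξ' hJ)
      (two_pi_le_abs_sub_of_ne hmj ξ) hr (by rwa [sq_abs]) hlam
end

section
/- Let f: ℝ → ℝ be twice continuously differentiable, let U ⊆ ℝ² be open, and let g: U → ℝ be differentiable and satisfy f(g(λ, c)) = c·g(λ, c) + λ and f'(g(λ, c)) − c > 0 for all (λ, c) ∈ U. Define K(λ, c) = √(f'(g(λ, c)) − c)/(2π). Then K is differentiable and at every (λ, c) ∈ U: (∂_c K)·(∂_λ g) − (∂_λ K)·(∂_c g) = −1/(4π·(f'(g(λ, c)) − c)^{3/2}); in particular this quantity never vanishes. -/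
open Real Filter Topology

/-!
Write `a = f'(g) − c`. Differentiating the critical-point equation `f(g) = c g + λ` in `λ` gives
`a ∂_λ g = 1`. By the chain rule `∇K = (f''(g) ∇g − ∇c) / (4π√a)`, and in the combination
`∂_c K ∂_λ g − ∂_λ K ∂_c g` the `f''(g)` terms cancel, leaving `−∂_λ g / (4π√a) = −1 / (4π a^{3/2})`.
-/

theorem mul_fderiv_fst_eq_one_of_eventually_critical {f : ℝ → ℝ} {g : ℝ × ℝ → ℝ}
    {L : ℝ × ℝ →L[ℝ] ℝ} {p : ℝ × ℝ} (hf : DifferentiableAt ℝ f (g p)) (hg : HasFDerivAt g L p)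
    (hcrit : (fun q => f (g q)) =ᶠ[𝓝 p] fun q => q.2 * g q + q.1) :
    (deriv f (g p) - p.2) * L (1, 0) = 1 := by
  have hlhs : HasFDerivAt (fun q => f (g q)) (deriv f (g p) • L) p :=
    hf.hasDerivAt.comp_hasFDerivAt p hg
  have hrhs : HasFDerivAt (fun q : ℝ × ℝ => q.2 * g q + q.1)
      (p.2 • L + g p • ContinuousLinearMap.snd ℝ ℝ ℝ + ContinuousLinearMap.fst ℝ ℝ ℝ) p :=
    (hasFDerivAt_snd.mul hg).add hasFDerivAt_fst
  have hL := congrArg (· (1, 0)) ((hlhs.congr_of_eventuallyEq hcrit.symm).unique hrhs)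
  simp only [add_apply, smul_apply, ContinuousLinearMap.coe_snd', ContinuousLinearMap.coe_fst',
    smul_eq_mul, mul_zero, add_zero] at hL
  linarith

theorem hasFDerivAt_sqrt_deriv_comp_sub_snd_div {f : ℝ → ℝ} {g : ℝ × ℝ → ℝ}
    {L : ℝ × ℝ →L[ℝ] ℝ} {p : ℝ × ℝ} (hf : DifferentiableAt ℝ (deriv f) (g p))
    (hg : HasFDerivAt g L p) (hpos : 0 < deriv f (g p) - p.2) (C : ℝ) :
    HasFDerivAt (fun q => √(deriv f (g q) - q.2) / C)
      ((C⁻¹ * (1 / (2 * √(deriv f (g p) - p.2)))) •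
        (deriv (deriv f) (g p) • L - ContinuousLinearMap.snd ℝ ℝ ℝ)) p := by
  have hφ : HasFDerivAt (fun q : ℝ × ℝ => deriv f (g q) - q.2)
      (deriv (deriv f) (g p) • L - ContinuousLinearMap.snd ℝ ℝ ℝ) p :=
    (hf.hasDerivAt.comp_hasFDerivAt p hg).sub hasFDerivAt_snd
  simpa only [div_eq_mul_inv, smul_smul] using (hφ.sqrt hpos.ne').mul_const C⁻¹

theorem cross_smul_smul_sub_snd (L : ℝ × ℝ →L[ℝ] ℝ) (s b : ℝ) :
    (s • (b • L - ContinuousLinearMap.snd ℝ ℝ ℝ)) (0, 1) * L (1, 0)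
      - (s • (b • L - ContinuousLinearMap.snd ℝ ℝ ℝ)) (1, 0) * L (0, 1) = -(s * L (1, 0)) := by
  simp only [smul_apply, sub_apply, ContinuousLinearMap.coe_snd', smul_eq_mul]
  ring

theorem rpow_three_halves_eq_mul_sqrt {a : ℝ} (ha : 0 ≤ a) : a ^ ((3 : ℝ) / 2) = a * √a := by
  rw [rpow_div_two_eq_sqrt 3 ha, show (3 : ℝ) = (3 : ℕ) by norm_num, rpow_natCast, pow_succ,
    sq_sqrt ha, mul_comm]

/-- The Jacobian-type identity `∂_c K · ∂_λ g − ∂_λ K · ∂_c g = −1/(4π(f'(g) − c)^{3/2})`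
for the limiting wavenumber `K(λ,c) = √(f'(g(λ,c)) − c)/(2π)` of small-amplitude waves
bifurcating from the critical point `g(λ,c)` of the potential; in particular this
quantity never vanishes. -/
theorem wavenumber_jacobian_identity
    (f : ℝ → ℝ) (hf : ContDiff ℝ 2 f)
    (U : Set (ℝ × ℝ)) (hU : IsOpen U)
    (g : ℝ × ℝ → ℝ)
    (hg : ∀ p ∈ U, DifferentiableAt ℝ g p)
    (hcrit : ∀ p ∈ U, f (g p) = p.2 * g p + p.1)
    (hpos : ∀ p ∈ U, deriv f (g p) - p.2 > 0)
    (K : ℝ × ℝ → ℝ)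
    (hK : K = fun p => Real.sqrt (deriv f (g p) - p.2) / (2 * π)) :
    ∀ p ∈ U, DifferentiableAt ℝ K p ∧
      (fderiv ℝ K p (0, 1) * fderiv ℝ g p (1, 0)
          - fderiv ℝ K p (1, 0) * fderiv ℝ g p (0, 1)
        = -(1 / (4 * π * (deriv f (g p) - p.2) ^ ((3 : ℝ) / 2)))) ∧
      (fderiv ℝ K p (0, 1) * fderiv ℝ g p (1, 0)
          - fderiv ℝ K p (1, 0) * fderiv ℝ g p (0, 1) ≠ 0) := by
  intro p hp
  have ha := hpos p hp
  have hgL := (hg p hp).hasFDerivAt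
  have hKL := hK ▸ hasFDerivAt_sqrt_deriv_comp_sub_snd_div
    (hf.differentiable_deriv_two (g p)) hgL ha (2 * π)
  have hg_fst : (deriv f (g p) - p.2) * fderiv ℝ g p (1, 0) = 1 :=
    mul_fderiv_fst_eq_one_of_eventually_critical (hf.differentiable two_ne_zero (g p)) hgL
      (eventually_of_mem (hU.mem_nhds hp) hcrit)
  set a := deriv f (g p) - p.2
  have hcross : fderiv ℝ K p (0, 1) * fderiv ℝ g p (1, 0)
      - fderiv ℝ K p (1, 0) * fderiv ℝ g p (0, 1)
        = -(1 / (4 * π * a ^ ((3 : ℝ) / 2))) := by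
    rw [hKL.fderiv, cross_smul_smul_sub_snd, rpow_three_halves_eq_mul_sqrt ha.le,
      eq_one_div_of_mul_eq_one_right hg_fst]
    field_simp
    norm_num
  refine ⟨hKL.differentiableAt, hcross, ?_⟩
  rw [hcross]
  exact neg_ne_zero.mpr (by positivity)
end

section
/- Let M ≥ 1 be an integer and K > 0, C₀ > 0. Then there exist τ₀ ∈ (0, 1) and C > 0 such that the following holds for every τ ∈ (0, τ₀) with η := −iτ, every b₁, b₂, b₃ ∈ ℂ with Re(b₁/η) ≤ C₀, Re(b₂/η) ≤ C₀ and Re(b₃/η) ≥ −C₀, and every continuous R: [0,1] → M₃(ℂ) with sup_{x∈[0,1]} ‖R(x)‖ ≤ K. Setting D(x) = diag(e^{x b₁/η}, e^{x b₂/η}, e^{−(1−x) b₃/η}), there exists a unique continuous Σ: [0,1] → M₃(ℂ) satisfying, for all x ∈ [0,1], Σ(x) = D(x) + η^M ∫₀^x diag(e^{(x−y)b₁/η}, e^{(x−y)b₂/η}, 0)·R(y)·Σ(y) dy − η^M ∫_x^1 diag(0, 0, e^{−(y−x)b₃/η})·R(y)·Σ(y) dy. Moreover Σ is continuously differentiable,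 satisfies Σ'(x) = (η^{−1}·diag(b₁, b₂, b₃) + η^M·R(x))·Σ(x) on [0,1], and sup_{x∈[0,1]} ‖Σ(x) − D(x)‖ ≤ C·τ^M. -/
open Real Set

attribute [local instance] Matrix.normedAddCommGroup Matrix.normedSpace

/-- The integral equation defining the matrix solution `S` with prescribed exponential
behavior `D`:
`S(x) = D(x) + η^M ∫₀ˣ diag(e^{(x−y)b₁/η}, e^{(x−y)b₂/η}, 0) R(y) S(y) dy
             − η^M ∫ₓ¹ diag(0, 0, e^{−(y−x)b₃/η}) R(y) S(y) dy` for `x ∈ [0,1]`. -/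
def SigmaIntegralEq (η : ℂ) (M : ℕ) (b₁ b₂ b₃ : ℂ)
    (D R S : ℝ → Matrix (Fin 3) (Fin 3) ℂ) : Prop :=
  ∀ x ∈ Icc (0 : ℝ) 1,
    S x = D x
      + η ^ M • (∫ y in (0 : ℝ)..x,
          Matrix.diagonal ![Complex.exp (((x - y : ℝ) : ℂ) * b₁ / η),
            Complex.exp (((x - y : ℝ) : ℂ) * b₂ / η), 0] * (R y * S y))
      - η ^ M • (∫ y in x..(1 : ℝ),
          Matrix.diagonal ![0, 0,
            Complex.exp (-(((y - x : ℝ) : ℂ)) * b₃ / η)] * (R y * S y))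

/-!
Write `E(t) = diag(e^{t b₁/η}, e^{t b₂/η}, e^{t b₃/η})`. Both kernels of the integral equation are
`E(x - y)` masked by `diag(1, 1, 0)` resp. `diag(0, 0, 1)`, so the equation reads `Σ = D + η^M V Σ`
with `V` linear. On `[0, 1]` the masked kernels are bounded by `e^{C₀}` thanks to the sign
conditions on `Re(bᵢ/η)`, hence `‖η^M V Σ‖ ≤ θ sup ‖Σ‖` with `θ = 9 e^{C₀} K τ^M ≤ 1/2` for
small `τ`. Banach's fixed point theorem on `C([0, 1])` gives a solution; applying the same bound
to a difference of solutions, resp. to `Σ - D`, at a maximum point of its norm gives uniqueness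
and `‖Σ - D‖ ≤ 2 θ e^{C₀}`. Finally `E(x - y) = E(x) E(-y)` turns `V Σ (x)` into
`E(x) (∫₀ˣ E(-y) R Σ - diag(0, 0, 1) ∫₀¹ E(-y) R Σ)`, whose derivative is
`η⁻¹ diag(b₁, b₂, b₃) V Σ (x) + R(x) Σ(x)`; this is the differential equation.
-/

section FixedPoint

open scoped NNReal

variable {E : Type*} [NormedAddCommGroup E]

theorem IsCompact.norm_le_div_of_forall_norm_le_mul_add {α : Type*} [TopologicalSpace α] {s : Set α}
    (hs : IsCompact s) {f : α → E} (hf : ContinuousOn f s) {q c : ℝ} (hq : q < 1)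
    (h : ∀ m, (∀ y ∈ s, ‖f y‖ ≤ m) → ∀ x ∈ s, ‖f x‖ ≤ q * m + c) :
    ∀ x ∈ s, ‖f x‖ ≤ c / (1 - q) := by
  rcases s.eq_empty_or_nonempty with rfl | hne
  · simp
  obtain ⟨x₀, hx₀, hmax⟩ := hs.exists_isMaxOn hne hf.norm
  have hsup : ∀ y ∈ s, ‖f y‖ ≤ ‖f x₀‖ := fun y hy => hmax hy
  have hx₀le : ‖f x₀‖ ≤ c / (1 - q) := by
    rw [le_div_iff₀ (by linarith)]
    linarith [h _ hsup x₀ hx₀]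
  exact fun x hx => (hsup x hx).trans hx₀le

theorem exists_continuous_fixedPoint_on_Icc [CompleteSpace E] {a b : ℝ} (hab : a ≤ b)
    (Φ : (ℝ → E) → ℝ → E) {q : ℝ≥0} (hq : q < 1)
    (hcont : ∀ S, Continuous S → ContinuousOn (Φ S) (Icc a b))
    (hlip : ∀ S₁ S₂, Continuous S₁ → Continuous S₂ → ∀ m,
      (∀ y ∈ Icc a b, ‖S₁ y - S₂ y‖ ≤ m) → ∀ x ∈ Icc a b, ‖Φ S₁ x - Φ S₂ x‖ ≤ q * m) :
    ∃ S, Continuous S ∧ ∀ x ∈ Icc a b, S x = Φ S x := by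
  let T : C(Icc a b, E) → C(Icc a b, E) := fun g =>
    ⟨(Icc a b).domRestrict (Φ (IccExtend hab g)), (hcont _ g.continuous.Icc_extend').domRestrict⟩
  have hT : ContractingWith q T := by
    refine ⟨hq, LipschitzWith.of_dist_le_mul fun g₁ g₂ => ?_⟩
    refine (ContinuousMap.dist_le (by positivity)).2 fun p => ?_
    rw [dist_eq_norm]
    refine hlip _ _ g₁.continuous.Icc_extend' g₂.continuous.Icc_extend' _ (fun y _ => ?_) p p.2
    rw [← dist_eq_norm]
    exact ContinuousMap.dist_apply_le_dist _
  obtain ⟨g, hg⟩ : ∃ g, T g = g := ⟨_, hT.fixedPoint_isFixedPt⟩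
  refine ⟨IccExtend hab g, g.continuous.Icc_extend', fun x hx => ?_⟩
  rw [IccExtend_of_mem _ _ hx]
  conv_lhs => rw [← hg]
  rfl

end FixedPoint

namespace Matrix

variable {l m n α : Type*} [Fintype l] [Fintype m] [Fintype n]

theorem norm_mul_le_card_mul [NonUnitalNormedRing α] (A : Matrix l m α) (B : Matrix m n α) :
    ‖A * B‖ ≤ Fintype.card m * ‖A‖ * ‖B‖ := by
  rw [norm_le_iff (by positivity)]
  intro i j
  calc ‖(A * B) i j‖ ≤ ∑ k, ‖A i k * B k j‖ := norm_sum_le _ _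
    _ ≤ ∑ _k : m, ‖A‖ * ‖B‖ := Finset.sum_le_sum fun k _ => (norm_mul_le _ _).trans <|
        mul_le_mul (norm_entry_le_entrywise_sup_norm A) (norm_entry_le_entrywise_sup_norm B)
          (norm_nonneg _) (norm_nonneg _)
    _ = Fintype.card m * ‖A‖ * ‖B‖ := by simp [mul_assoc]

/-- `Matrix.normedAddCommGroup` with its uniformity replaced by `Matrix.instUniformSpace`, so that
its topology unifies with `instTopologicalSpaceMatrix` at instance transparency, as the
integrability, completeness and `C(_, _)` instances require. -/
@[reducible] noncomputable def uniformNormedAddCommGroup [NormedAddCommGroup α] :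
    NormedAddCommGroup (Matrix m n α) where
  toNorm := Matrix.normedAddCommGroup.toNorm
  toMetricSpace := @MetricSpace.replaceUniformity _ (instUniformSpace m n α)
    Matrix.normedAddCommGroup.toMetricSpace rfl
  dist_eq := Matrix.normedAddCommGroup.dist_eq

@[reducible] noncomputable def uniformNormedSpace (𝕜 : Type*) [NormedField 𝕜]
    [NormedAddCommGroup α] [NormedSpace 𝕜 α] :
    @NormedSpace 𝕜 (Matrix m n α) _ uniformNormedAddCommGroup.toSeminormedAddCommGroup :=
  { (Matrix.normedSpace : NormedSpace 𝕜 (Matrix m n α)) with }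

end Matrix

theorem ContinuousOn.matrix_mul {X m n p R : Type*} [TopologicalSpace X] [TopologicalSpace R]
    [Fintype n] [Mul R] [AddCommMonoid R] [ContinuousAdd R] [ContinuousMul R]
    {f : X → Matrix m n R} {g : X → Matrix n p R} {s : Set X}
    (hf : ContinuousOn f s) (hg : ContinuousOn g s) : ContinuousOn (fun x => f x * g x) s :=
  continuousOn_iff_continuous_domRestrict.2 <|
    (continuousOn_iff_continuous_domRestrict.1 hf).matrix_mul
      (continuousOn_iff_continuous_domRestrict.1 hg)

section MatrixAnalysis

attribute [local instance] Matrix.uniformNormedAddCommGroup Matrix.uniformNormedSpace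

open Matrix

variable {n : Type*} [Fintype n] [DecidableEq n]

theorem HasDerivWithinAt.matrix_mul {f g : ℝ → Matrix n n ℂ} {f' g' : Matrix n n ℂ} {s : Set ℝ}
    {x : ℝ} (hf : HasDerivWithinAt f f' s x) (hg : HasDerivWithinAt g g' s x) :
    HasDerivWithinAt (fun t => f t * g t) (f' * g x + f x * g') s x := by
  rw [add_comm]
  exact ((LinearMap.mul ℝ (Matrix n n ℂ)).mkContinuous₂ _
    norm_mul_le_card_mul).hasDerivWithinAt_of_bilinear hf hg

theorem intervalIntegral.integral_const_matrix_mul (A : Matrix n n ℂ) {f : ℝ → Matrix n n ℂ}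
    {a b : ℝ} (hf : IntervalIntegrable f MeasureTheory.volume a b) :
    ∫ y in a..b, A * f y = A * ∫ y in a..b, f y :=
  (((LinearMap.mul ℝ (Matrix n n ℂ)).mkContinuous₂ _ norm_mul_le_card_mul)
    A).intervalIntegral_comp_comm hf

noncomputable def expDiag (c : n → ℂ) (t : ℝ) : Matrix n n ℂ :=
  diagonal fun i => Complex.exp (t * c i)

theorem expDiag_add (c : n → ℂ) (s t : ℝ) : expDiag c (s + t) = expDiag c s * expDiag c t := by
  simp [expDiag, diagonal_mul_diagonal, add_mul, Complex.exp_add]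

theorem expDiag_mul_expDiag_neg (c : n → ℂ) (t : ℝ) : expDiag c t * expDiag c (-t) = 1 := by
  rw [← expDiag_add, add_neg_cancel]
  simp [expDiag]

theorem diagonal_mul_expDiag_comm (p c : n → ℂ) (t : ℝ) :
    diagonal p * expDiag c t = expDiag c t * diagonal p := by
  simp only [expDiag, diagonal_mul_diagonal, mul_comm]

theorem hasDerivAt_expDiag (c : n → ℂ) (t : ℝ) :
    HasDerivAt (expDiag c) (diagonal c * expDiag c t) t := by
  have hexp : ∀ i, HasDerivAt (fun s : ℝ => Complex.exp (s * c i))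
      (c i * Complex.exp (t * c i)) t := fun i => by
      simpa [mul_comm] using ((hasDerivAt_id t).ofReal_comp.mul_const (c i)).cexp
  rw [expDiag, diagonal_mul_diagonal]
  exact (diagonalLinearMap n ℝ ℂ).toContinuousLinearMap.hasFDerivAt.comp_hasDerivAt t
    (hasDerivAt_pi.2 hexp)

theorem continuous_expDiag (c : n → ℂ) : Continuous (expDiag c) :=
  continuous_iff_continuousAt.2 fun t => (hasDerivAt_expDiag c t).continuousAt

noncomputable def volterraOp (p q c : n → ℂ) (R S : ℝ → Matrix n n ℂ) (x : ℝ) : Matrix n n ℂ :=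
  (∫ y in (0 : ℝ)..x, diagonal p * expDiag c (x - y) * (R y * S y))
    - ∫ y in x..1, diagonal q * expDiag c (x - y) * (R y * S y)

variable {p q c : n → ℂ} {R S : ℝ → Matrix n n ℂ} {x : ℝ}

theorem norm_volterraOp_le {κ K m : ℝ}
    (hp : ∀ t ∈ Icc (0 : ℝ) 1, ‖diagonal p * expDiag c t‖ ≤ κ)
    (hq : ∀ t ∈ Icc (-1 : ℝ) 0, ‖diagonal q * expDiag c t‖ ≤ κ)
    (hR : ∀ y ∈ Icc (0 : ℝ) 1, ‖R y‖ ≤ K) (hS : ∀ y ∈ Icc (0 : ℝ) 1, ‖S y‖ ≤ m)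
    (hx : x ∈ Icc (0 : ℝ) 1) :
    ‖volterraOp p q c R S x‖ ≤ Fintype.card n ^ 2 * κ * K * m := by
  set N : ℝ := (Fintype.card n : ℝ)
  have hintegrand : ∀ A : Matrix n n ℂ, ‖A‖ ≤ κ → ∀ y ∈ Icc (0 : ℝ) 1,
      ‖A * (R y * S y)‖ ≤ N ^ 2 * κ * K * m := fun A hA y hy => by
    have hκ : 0 ≤ κ := (norm_nonneg _).trans hA
    have hK : 0 ≤ K := (norm_nonneg _).trans (hR y hy)
    calc ‖A * (R y * S y)‖ ≤ N * ‖A‖ * (N * ‖R y‖ * ‖S y‖) :=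
          (norm_mul_le_card_mul _ _).trans <| by gcongr; exact norm_mul_le_card_mul _ _
      _ ≤ N * κ * (N * K * m) := by gcongr <;> first | exact hA | exact hR y hy | exact hS y hy
      _ = N ^ 2 * κ * K * m := by ring
  have hlower : ‖∫ y in (0 : ℝ)..x, diagonal p * expDiag c (x - y) * (R y * S y)‖
      ≤ N ^ 2 * κ * K * m * |x - 0| := by
    refine intervalIntegral.norm_integral_le_of_norm_le_const fun y hy => ?_
    rw [uIoc_of_le hx.1] at hy
    exact hintegrand _ (hp _ ⟨by linarith [hy.2], by linarith [hy.1, hx.2]⟩) y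
      ⟨hy.1.le, hy.2.trans hx.2⟩
  have hupper : ‖∫ y in x..1, diagonal q * expDiag c (x - y) * (R y * S y)‖
      ≤ N ^ 2 * κ * K * m * |1 - x| := by
    refine intervalIntegral.norm_integral_le_of_norm_le_const fun y hy => ?_
    rw [uIoc_of_le hx.2] at hy
    exact hintegrand _ (hq _ ⟨by linarith [hy.2, hx.1], by linarith [hy.1]⟩) y
      ⟨hx.1.trans hy.1.le, hy.2⟩
  calc ‖volterraOp p q c R S x‖
      ≤ N ^ 2 * κ * K * m * |x - 0| + N ^ 2 * κ * K * m * |1 - x| :=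
        (norm_sub_le _ _).trans (add_le_add hlower hupper)
    _ = N ^ 2 * κ * K * m := by
        rw [abs_of_nonneg (by linarith [hx.1]), abs_of_nonneg (by linarith [hx.2])]; ring

theorem volterraOp_sub {S₁ S₂ : ℝ → Matrix n n ℂ} (hR : ContinuousOn R (Icc 0 1))
    (hS₁ : ContinuousOn S₁ (Icc 0 1)) (hS₂ : ContinuousOn S₂ (Icc 0 1)) (hx : x ∈ Icc (0 : ℝ) 1) :
    volterraOp p q c R (S₁ - S₂) x = volterraOp p q c R S₁ x - volterraOp p q c R S₂ x := by
  have hint : ∀ (A : Matrix n n ℂ) (S : ℝ → Matrix n n ℂ), ContinuousOn S (Icc 0 1) →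
      ∀ a b, uIcc a b ⊆ Icc 0 1 →
      IntervalIntegrable (fun y => A * expDiag c (x - y) * (R y * S y)) MeasureTheory.volume a b :=
    fun A S hS a b hab => ContinuousOn.intervalIntegrable <|
      ((continuousOn_const.matrix_mul ((continuous_expDiag c).comp
        (continuous_const.sub continuous_id)).continuousOn).matrix_mul (hR.matrix_mul hS)).mono hab
  have h0x : uIcc 0 x ⊆ Icc (0 : ℝ) 1 := by
    rw [uIcc_of_le hx.1]; exact Icc_subset_Icc le_rfl hx.2
  have hx1 : uIcc x 1 ⊆ Icc (0 : ℝ) 1 := by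
    rw [uIcc_of_le hx.2]; exact Icc_subset_Icc hx.1 le_rfl
  simp only [volterraOp, Pi.sub_apply, mul_sub]
  rw [intervalIntegral.integral_sub (hint _ _ hS₁ _ _ h0x) (hint _ _ hS₂ _ _ h0x),
    intervalIntegral.integral_sub (hint _ _ hS₁ _ _ hx1) (hint _ _ hS₂ _ _ hx1)]
  abel

theorem volterraOp_eq_expDiag_mul (hR : ContinuousOn R (Icc 0 1)) (hS : ContinuousOn S (Icc 0 1))
    (hx : x ∈ Icc (0 : ℝ) 1) :
    volterraOp p q c R S x = expDiag c x *
      (diagonal (p + q) * (∫ y in (0 : ℝ)..x, expDiag c (-y) * (R y * S y))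
        - diagonal q * ∫ y in (0 : ℝ)..1, expDiag c (-y) * (R y * S y)) := by
  have hH : ContinuousOn (fun y => expDiag c (-y) * (R y * S y)) (Icc 0 1) :=
    ((continuous_expDiag c).comp continuous_neg).continuousOn.matrix_mul (hR.matrix_mul hS)
  have h0x := (hH.mono (Icc_subset_Icc le_rfl hx.2)).intervalIntegrable_of_Icc
    (μ := MeasureTheory.volume) hx.1
  have h01 := hH.intervalIntegrable_of_Icc (μ := MeasureTheory.volume) zero_le_one
  have hsplit : ∀ (A : Matrix n n ℂ) y, A * expDiag c (x - y) * (R y * S y) =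
      A * expDiag c x * (expDiag c (-y) * (R y * S y)) := fun A y => by
    rw [sub_eq_add_neg, expDiag_add]; noncomm_ring
  simp only [volterraOp, hsplit]
  rw [intervalIntegral.integral_const_matrix_mul _ h0x,
    intervalIntegral.integral_const_matrix_mul _ (h0x.symm.trans h01),
    ← intervalIntegral.integral_interval_sub_left h01 h0x, diagonal_mul_expDiag_comm p,
    diagonal_mul_expDiag_comm q, show diagonal (p + q) = diagonal p + diagonal q from
      (diagonal_add p q).symm]
  noncomm_ring

theorem hasDerivWithinAt_volterraOp (hR : ContinuousOn R (Icc 0 1))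
    (hS : ContinuousOn S (Icc 0 1)) (hx : x ∈ Icc (0 : ℝ) 1) :
    HasDerivWithinAt (volterraOp p q c R S)
      (diagonal c * volterraOp p q c R S x + diagonal (p + q) * (R x * S x)) (Icc 0 1) x := by
  -- needed by the `FTCFilter` instance for `𝓝[Icc 0 1] x`
  have : Fact (x ∈ Icc (0 : ℝ) 1) := ⟨hx⟩
  have hH : ContinuousOn (fun y => expDiag c (-y) * (R y * S y)) (Icc 0 1) :=
    ((continuous_expDiag c).comp continuous_neg).continuousOn.matrix_mul (hR.matrix_mul hS)
  have hprim : HasDerivWithinAt (fun z => ∫ y in (0 : ℝ)..z, expDiag c (-y) * (R y * S y))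
      (expDiag c (-x) * (R x * S x)) (Icc 0 1) x :=
    intervalIntegral.integral_hasDerivWithinAt_right
      ((hH.mono (Icc_subset_Icc le_rfl hx.2)).intervalIntegrable_of_Icc hx.1)
      (hH.stronglyMeasurableAtFilter_nhdsWithin measurableSet_Icc x) (hH x hx)
  have hprod := (hasDerivAt_expDiag c x).hasDerivWithinAt.matrix_mul
    (((hasDerivWithinAt_const x _ (diagonal (p + q))).matrix_mul hprim).sub_const
      (diagonal q * ∫ y in (0 : ℝ)..1, expDiag c (-y) * (R y * S y)))
  refine (hprod.congr (fun z hz => volterraOp_eq_expDiag_mul hR hS hz)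
    (volterraOp_eq_expDiag_mul hR hS hx)).congr_deriv ?_
  rw [volterraOp_eq_expDiag_mul hR hS hx, zero_mul, zero_add, mul_assoc (diagonal c)]
  congr 1
  rw [← mul_assoc, ← diagonal_mul_expDiag_comm, mul_assoc, ← mul_assoc (expDiag c x),
    expDiag_mul_expDiag_neg, one_mul]

theorem continuousOn_volterraOp (hR : ContinuousOn R (Icc 0 1)) (hS : ContinuousOn S (Icc 0 1)) :
    ContinuousOn (volterraOp p q c R S) (Icc 0 1) :=
  fun _ hx => (hasDerivWithinAt_volterraOp hR hS hx).continuousWithinAt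

variable {D : ℝ → Matrix n n ℂ} {ε : ℂ} {θ : ℝ}

theorem exists_volterra_solution (hR : ContinuousOn R (Icc 0 1)) (hD : ContinuousOn D (Icc 0 1))
    (hθ₀ : 0 ≤ θ) (hθ₁ : θ < 1)
    (hθ : ∀ (S : ℝ → Matrix n n ℂ) m, (∀ y ∈ Icc (0 : ℝ) 1, ‖S y‖ ≤ m) →
      ∀ x ∈ Icc (0 : ℝ) 1, ‖ε • volterraOp p q c R S x‖ ≤ θ * m) :
    ∃ S, Continuous S ∧ ∀ x ∈ Icc (0 : ℝ) 1, S x = D x + ε • volterraOp p q c R S x := by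
  refine exists_continuous_fixedPoint_on_Icc zero_le_one
    (fun S x => D x + ε • volterraOp p q c R S x) (q := ⟨θ, hθ₀⟩) hθ₁
    (fun S hS => hD.add ((continuousOn_volterraOp hR hS.continuousOn).const_smul ε))
    fun S₁ S₂ hS₁ hS₂ m hm x hx => ?_
  rw [add_sub_add_left_eq_sub, ← smul_sub,
    ← volterraOp_sub hR hS₁.continuousOn hS₂.continuousOn hx]
  exact hθ _ m hm x hx

theorem eqOn_of_volterra_solution {S₁ S₂ : ℝ → Matrix n n ℂ} (hR : ContinuousOn R (Icc 0 1))
    (hS₁ : ContinuousOn S₁ (Icc 0 1)) (hS₂ : ContinuousOn S₂ (Icc 0 1))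
    (h₁ : ∀ x ∈ Icc (0 : ℝ) 1, S₁ x = D x + ε • volterraOp p q c R S₁ x)
    (h₂ : ∀ x ∈ Icc (0 : ℝ) 1, S₂ x = D x + ε • volterraOp p q c R S₂ x) (hθ₁ : θ < 1)
    (hθ : ∀ (S : ℝ → Matrix n n ℂ) m, (∀ y ∈ Icc (0 : ℝ) 1, ‖S y‖ ≤ m) →
      ∀ x ∈ Icc (0 : ℝ) 1, ‖ε • volterraOp p q c R S x‖ ≤ θ * m) :
    EqOn S₁ S₂ (Icc 0 1) := by
  have hzero := isCompact_Icc.norm_le_div_of_forall_norm_le_mul_add (hS₁.sub hS₂) hθ₁ (c := 0)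
    fun m hm x hx => by
      rw [add_zero, Pi.sub_apply, h₁ x hx, h₂ x hx, add_sub_add_left_eq_sub, ← smul_sub,
        ← volterraOp_sub hR hS₁ hS₂ hx]
      exact hθ _ m hm x hx
  intro x hx
  simpa [sub_eq_zero] using hzero x hx

theorem norm_sub_le_of_volterra_solution {κ : ℝ} (hD : ContinuousOn D (Icc 0 1))
    (hDκ : ∀ y ∈ Icc (0 : ℝ) 1, ‖D y‖ ≤ κ) (hS : ContinuousOn S (Icc 0 1))
    (h : ∀ x ∈ Icc (0 : ℝ) 1, S x = D x + ε • volterraOp p q c R S x) (hθ₁ : θ < 1)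
    (hθ : ∀ (S : ℝ → Matrix n n ℂ) m, (∀ y ∈ Icc (0 : ℝ) 1, ‖S y‖ ≤ m) →
      ∀ x ∈ Icc (0 : ℝ) 1, ‖ε • volterraOp p q c R S x‖ ≤ θ * m) :
    ∀ x ∈ Icc (0 : ℝ) 1, ‖S x - D x‖ ≤ θ * κ / (1 - θ) := by
  refine isCompact_Icc.norm_le_div_of_forall_norm_le_mul_add (hS.sub hD) hθ₁ fun m hm x hx => ?_
  have hSbound : ∀ y ∈ Icc (0 : ℝ) 1, ‖S y‖ ≤ m + κ := fun y hy =>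
    calc ‖S y‖ = ‖(S y - D y) + D y‖ := by rw [sub_add_cancel]
      _ ≤ m + κ := (norm_add_le _ _).trans (add_le_add (hm y hy) (hDκ y hy))
  calc ‖(S - D) x‖ = ‖ε • volterraOp p q c R S x‖ := by
        rw [Pi.sub_apply, h x hx, add_sub_cancel_left]
    _ ≤ θ * (m + κ) := hθ S _ hSbound x hx
    _ = θ * m + θ * κ := by ring

theorem hasDerivWithinAt_of_volterra_solution (hR : ContinuousOn R (Icc 0 1))
    (hS : ContinuousOn S (Icc 0 1))
    (h : ∀ x ∈ Icc (0 : ℝ) 1, S x = D x + ε • volterraOp p q c R S x)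
    (hD : ∀ x ∈ Icc (0 : ℝ) 1, HasDerivWithinAt D (diagonal c * D x) (Icc 0 1) x)
    (hpq : p + q = 1) (hx : x ∈ Icc (0 : ℝ) 1) :
    HasDerivWithinAt S ((diagonal c + ε • R x) * S x) (Icc 0 1) x := by
  refine (((hD x hx).add ((hasDerivWithinAt_volterraOp hR hS hx).const_smul ε)).congr h
    (h x hx)).congr_deriv ?_
  rw [hpq, diagonal_one', one_mul, h x hx]
  simp only [add_mul, mul_add, smul_add, mul_smul_comm, smul_mul_assoc]
  abel

end MatrixAnalysis

section SigmaEquation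

attribute [local instance] Matrix.uniformNormedAddCommGroup Matrix.uniformNormedSpace

open Matrix

variable {η b₁ b₂ b₃ : ℂ} {C₀ : ℝ}

theorem norm_cexp_ofReal_mul_le {t : ℝ} {z : ℂ} (ht : t ∈ Icc (0 : ℝ) 1) (hz : z.re ≤ C₀)
    (hC₀ : 0 ≤ C₀) : ‖Complex.exp (t * z)‖ ≤ Real.exp C₀ := by
  rw [Complex.norm_exp, Complex.re_ofReal_mul]
  exact Real.exp_le_exp.2 (by nlinarith [ht.1, ht.2])

theorem norm_cexp_mul_div_le {t : ℝ} {b : ℂ} (ht : t ∈ Icc (0 : ℝ) 1) (hb : (b / η).re ≤ C₀)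
    (hC₀ : 0 ≤ C₀) : ‖Complex.exp (t * b / η)‖ ≤ Real.exp C₀ := by
  rw [mul_div_assoc]
  exact norm_cexp_ofReal_mul_le ht hb hC₀

theorem norm_cexp_neg_mul_div_le {t : ℝ} {b : ℂ} (ht : t ∈ Icc (0 : ℝ) 1) (hb : -C₀ ≤ (b / η).re)
    (hC₀ : 0 ≤ C₀) : ‖Complex.exp (-t * b / η)‖ ≤ Real.exp C₀ := by
  rw [show -(t : ℂ) * b / η = t * -(b / η) by ring]
  exact norm_cexp_ofReal_mul_le ht (by rw [Complex.neg_re]; linarith) hC₀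

theorem norm_diagonal_fin_three_le {a b c : ℂ} {r : ℝ} (ha : ‖a‖ ≤ r) (hb : ‖b‖ ≤ r)
    (hc : ‖c‖ ≤ r) : ‖(diagonal ![a, b, c] : Matrix (Fin 3) (Fin 3) ℂ)‖ ≤ r := by
  rw [norm_diagonal, pi_norm_le_iff_of_nonneg ((norm_nonneg a).trans ha)]
  intro i
  fin_cases i <;> assumption

theorem diagonal_cexp_lower_eq (t : ℝ) :
    (diagonal ![Complex.exp (t * b₁ / η), Complex.exp (t * b₂ / η), 0] : Matrix (Fin 3) (Fin 3) ℂ)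
      = diagonal ![1, 1, 0] * expDiag (η⁻¹ • ![b₁, b₂, b₃]) t := by
  rw [expDiag, diagonal_mul_diagonal]
  congr 1
  ext i
  fin_cases i <;> simp <;> ring_nf

theorem diagonal_cexp_upper_eq (t : ℝ) :
    (diagonal ![0, 0, Complex.exp (-t * b₃ / η)] : Matrix (Fin 3) (Fin 3) ℂ)
      = diagonal ![0, 0, 1] * expDiag (η⁻¹ • ![b₁, b₂, b₃]) (-t) := by
  rw [expDiag, diagonal_mul_diagonal]
  congr 1
  ext i
  fin_cases i <;> simp
  ring_nf

theorem sigmaIntegralEq_iff {M : ℕ} {D R S : ℝ → Matrix (Fin 3) (Fin 3) ℂ} :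
    SigmaIntegralEq η M b₁ b₂ b₃ D R S ↔ ∀ x ∈ Icc (0 : ℝ) 1,
      S x = D x + η ^ M • volterraOp ![1, 1, 0] ![0, 0, 1] (η⁻¹ • ![b₁, b₂, b₃]) R S x := by
  simp only [SigmaIntegralEq, volterraOp, diagonal_cexp_lower_eq (b₃ := b₃),
    diagonal_cexp_upper_eq (b₁ := b₁) (b₂ := b₂), neg_sub, smul_sub, add_sub_assoc]
  exact Iff.rfl

theorem norm_smul_volterraOp_le {M : ℕ} {K : ℝ} {R : ℝ → Matrix (Fin 3) (Fin 3) ℂ}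
    (hC₀ : 0 ≤ C₀) (hb₁ : (b₁ / η).re ≤ C₀) (hb₂ : (b₂ / η).re ≤ C₀) (hb₃ : -C₀ ≤ (b₃ / η).re)
    (hR : ∀ y ∈ Icc (0 : ℝ) 1, ‖R y‖ ≤ K) (S : ℝ → Matrix (Fin 3) (Fin 3) ℂ) (m : ℝ)
    (hS : ∀ y ∈ Icc (0 : ℝ) 1, ‖S y‖ ≤ m) (x : ℝ) (hx : x ∈ Icc (0 : ℝ) 1) :
    ‖η ^ M • volterraOp ![1, 1, 0] ![0, 0, 1] (η⁻¹ • ![b₁, b₂, b₃]) R S x‖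
      ≤ ‖η‖ ^ M * (9 * Real.exp C₀ * K) * m := by
  have hexp : 0 ≤ Real.exp C₀ := (Real.exp_pos _).le
  have hV := norm_volterraOp_le (p := ![1, 1, 0]) (q := ![0, 0, 1]) (c := η⁻¹ • ![b₁, b₂, b₃])
    (κ := Real.exp C₀) (fun t ht => ?_) (fun t ht => ?_) hR hS hx
  · rw [norm_smul, norm_pow, mul_assoc]
    gcongr
    refine hV.trans_eq ?_
    norm_num
  · rw [← diagonal_cexp_lower_eq]
    exact norm_diagonal_fin_three_le (norm_cexp_mul_div_le ht hb₁ hC₀)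
      (norm_cexp_mul_div_le ht hb₂ hC₀) (by simpa using hexp)
  · rw [← neg_neg t, ← diagonal_cexp_upper_eq (b₁ := b₁) (b₂ := b₂)]
    have ht' : -t ∈ Icc (0 : ℝ) 1 := ⟨by linarith [ht.2], by linarith [ht.1]⟩
    exact norm_diagonal_fin_three_le (by simpa using hexp) (by simpa using hexp)
      (norm_cexp_neg_mul_div_le ht' hb₃ hC₀)

noncomputable def expProfile (η b₁ b₂ b₃ : ℂ) (x : ℝ) : Matrix (Fin 3) (Fin 3) ℂ :=
  diagonal ![Complex.exp (x * b₁ / η), Complex.exp (x * b₂ / η),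
    Complex.exp (-((1 - x : ℝ) : ℂ) * b₃ / η)]

theorem expProfile_eq (x : ℝ) : expProfile η b₁ b₂ b₃ x =
    expDiag (η⁻¹ • ![b₁, b₂, b₃]) x * diagonal ![1, 1, Complex.exp (-(b₃ / η))] := by
  rw [expProfile, expDiag, diagonal_mul_diagonal]
  congr 1
  ext i
  fin_cases i <;> simp [← Complex.exp_add] <;> ring_nf

theorem continuous_expProfile : Continuous (expProfile η b₁ b₂ b₃) := by
  simpa only [funext expProfile_eq] using (continuous_expDiag _).matrix_mul continuous_const

theorem hasDerivAt_expProfile (x : ℝ) :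
    HasDerivAt (expProfile η b₁ b₂ b₃)
      (diagonal (η⁻¹ • ![b₁, b₂, b₃]) * expProfile η b₁ b₂ b₃ x) x := by
  have h := (hasDerivAt_expDiag (η⁻¹ • ![b₁, b₂, b₃]) x).hasDerivWithinAt (s := univ) |>.matrix_mul
    (hasDerivWithinAt_const x univ (diagonal ![1, 1, Complex.exp (-(b₃ / η))]))
  rw [mul_zero, add_zero, mul_assoc, ← expProfile_eq] at h
  exact hasDerivWithinAt_univ.mp (by simpa only [funext expProfile_eq] using h)

theorem norm_expProfile_le {x : ℝ} (hx : x ∈ Icc (0 : ℝ) 1) (hC₀ : 0 ≤ C₀)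
    (hb₁ : (b₁ / η).re ≤ C₀) (hb₂ : (b₂ / η).re ≤ C₀) (hb₃ : -C₀ ≤ (b₃ / η).re) :
    ‖expProfile η b₁ b₂ b₃ x‖ ≤ Real.exp C₀ :=
  norm_diagonal_fin_three_le (norm_cexp_mul_div_le hx hb₁ hC₀) (norm_cexp_mul_div_le hx hb₂ hC₀)
    (norm_cexp_neg_mul_div_le ⟨by linarith [hx.2], by linarith [hx.1]⟩ hb₃ hC₀)

theorem pow_mul_le_half {τ L : ℝ} {M : ℕ} (hM : 1 ≤ M) (hτ : 0 ≤ τ) (hL : 0 < L)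
    (hτ₀ : τ < min (1 / 2) (1 / (2 * L))) : τ ^ M * L ≤ 1 / 2 := by
  have hτ₁ : τ ≤ 1 := by linarith [hτ₀.trans_le (min_le_left _ _)]
  have hτL : τ * L < 1 / 2 := by
    have := hτ₀.trans_le (min_le_right _ _)
    rw [lt_div_iff₀ (by positivity)] at this
    linarith
  nlinarith [pow_le_of_le_one hτ hτ₁ (by omega : M ≠ 0)]

end SigmaEquation

/-- Construction, by a fixed-point argument, of a matrix solution `Σ` of
`Σ' = (η^{−1} B + η^M R) Σ` on `[0,1]` with prescribed exponential behavior `D`,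
together with uniqueness and the bound `‖Σ − D‖ ≤ C τ^M`. -/
theorem matrix_solution_fixed_point
    (M : ℕ) (hM : 1 ≤ M) (K C₀ : ℝ) (hK : 0 < K) (hC₀ : 0 < C₀) :
    ∃ τ₀ ∈ Ioo (0 : ℝ) 1, ∃ C > 0, ∀ τ ∈ Ioo (0 : ℝ) τ₀, ∀ η : ℂ,
      η = -Complex.I * (τ : ℂ) →
      ∀ b₁ b₂ b₃ : ℂ, (b₁ / η).re ≤ C₀ → (b₂ / η).re ≤ C₀ → -C₀ ≤ (b₃ / η).re →
      ∀ R : ℝ → Matrix (Fin 3) (Fin 3) ℂ, ContinuousOn R (Icc 0 1) →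
        (∀ x ∈ Icc (0 : ℝ) 1, ‖R x‖ ≤ K) →
      ∀ D : ℝ → Matrix (Fin 3) (Fin 3) ℂ,
        D = (fun x : ℝ => Matrix.diagonal
          ![Complex.exp ((x : ℂ) * b₁ / η), Complex.exp ((x : ℂ) * b₂ / η),
            Complex.exp (-(((1 - x : ℝ)) : ℂ) * b₃ / η)]) →
        (∃ S : ℝ → Matrix (Fin 3) (Fin 3) ℂ,
          ContinuousOn S (Icc 0 1) ∧ SigmaIntegralEq η M b₁ b₂ b₃ D R S) ∧
        (∀ S₁ S₂ : ℝ → Matrix (Fin 3) (Fin 3) ℂ,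
          ContinuousOn S₁ (Icc 0 1) → SigmaIntegralEq η M b₁ b₂ b₃ D R S₁ →
          ContinuousOn S₂ (Icc 0 1) → SigmaIntegralEq η M b₁ b₂ b₃ D R S₂ →
          EqOn S₁ S₂ (Icc 0 1)) ∧
        (∀ S : ℝ → Matrix (Fin 3) (Fin 3) ℂ,
          ContinuousOn S (Icc 0 1) → SigmaIntegralEq η M b₁ b₂ b₃ D R S →
          (∀ x ∈ Icc (0 : ℝ) 1, HasDerivWithinAt S
            ((η⁻¹ • Matrix.diagonal ![b₁, b₂, b₃] + η ^ M • R x) * S x) (Icc 0 1) x) ∧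
          (∀ x ∈ Icc (0 : ℝ) 1, ‖S x - D x‖ ≤ C * τ ^ M)) := by
  set L := 9 * Real.exp C₀ * K
  have hL : 0 < L := by positivity
  refine ⟨min (1 / 2) (1 / (2 * L)), ⟨by positivity, (min_le_left _ _).trans_lt (by norm_num)⟩,
    2 * L * Real.exp C₀, by positivity, ?_⟩
  rintro τ ⟨hτ, hτ₀⟩ η rfl b₁ b₂ b₃ hb₁ hb₂ hb₃ R hR hRK D hD
  replace hD : D = expProfile _ b₁ b₂ b₃ := hD
  subst hD
  have hθ : τ ^ M * L ≤ 1 / 2 := pow_mul_le_half hM hτ.le hL hτ₀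
  have hsmall := norm_smul_volterraOp_le (M := M) hC₀.le hb₁ hb₂ hb₃ hRK
  rw [show ‖-Complex.I * (τ : ℂ)‖ = τ by simp [abs_of_pos hτ]] at hsmall
  simp only [sigmaIntegralEq_iff]
  refine ⟨?_, fun S₁ S₂ h₁ e₁ h₂ e₂ =>
    eqOn_of_volterra_solution hR h₁ h₂ e₁ e₂ (by linarith) hsmall,
    fun S hS e => ⟨fun x hx => ?_, fun x hx => ?_⟩⟩
  · obtain ⟨S, hS, e⟩ := exists_volterra_solution hR continuous_expProfile.continuousOn
      (by positivity) (by linarith) hsmall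
    exact ⟨S, hS.continuousOn, e⟩
  · have hpq : (![1, 1, 0] + ![0, 0, 1] : Fin 3 → ℂ) = 1 := by
      ext i; fin_cases i <;> simp
    rw [← Matrix.diagonal_smul]
    exact hasDerivWithinAt_of_volterra_solution hR hS e
      (fun x _ => (hasDerivAt_expProfile x).hasDerivWithinAt) hpq hx
  · calc ‖S x - expProfile _ b₁ b₂ b₃ x‖ ≤ τ ^ M * L * Real.exp C₀ / (1 - τ ^ M * L) :=
          norm_sub_le_of_volterra_solution continuous_expProfile.continuousOn
            (fun y hy => norm_expProfile_le hy hC₀.le hb₁ hb₂ hb₃) hS e (by linarith) hsmall x hx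
      _ ≤ 2 * L * Real.exp C₀ * τ ^ M := by
          rw [div_le_iff₀ (by linarith)]
          nlinarith [mul_nonneg (mul_nonneg (pow_nonneg hτ.le M) hL.le) (Real.exp_pos C₀).le]
end
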